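/- arXiv:2410.04018 — 7 statements merged into one kernel-verified Lean document; each statement's English description precedes it below -/
import Mathlib

section
/- For every integer N ≥ 1, the right Radau polynomial R_N has N pairwise distinct real roots, all lying in the half-open interval (0, 1]; in particular R_N has no multiple roots (no real number is a common root of R_N and its derivative). -/
/-!
Up to a nonzero factor, `R_{m+1}` is the `m`-th derivative of `f = X^m (X - 1)^(m+1)`. For
`k < m` the points `0` and `1` are roots of `f^(k)`, so if `f^(k)` has `k` distinct roots in
`(0, 1)`, Rolle's theorem between consecutive ones among these `k + 2` roots gives `k + 1`
distinct roots of `f^(k+1)` in `(0, 1)`. Hence `f^(m)` has `m` distinct roots in `(0, 1)`, and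
also the root `1`, where `f` vanishes to order `m + 1`. As `f^(m)` has degree `m + 1`, these are
all of its roots, and they are simple.
-/

open Polynomial

/-- Shifted Legendre polynomial on `[0,1]` via the Rodrigues formula. -/
noncomputable def shLegendre (n : ℕ) : Polynomial ℝ :=
  (n.factorial : ℝ)⁻¹ • derivative^[n] ((X ^ 2 - X) ^ n)

/-- Right Radau polynomial `R_N = ((-1)^N/2) (L_N - L_{N-1})`. -/
noncomputable def rightRadau (N : ℕ) : Polynomial ℝ :=
  ((-1 : ℝ) ^ N / 2) • (shLegendre N - shLegendre (N - 1))

open scoped Finset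

namespace Polynomial

open scoped Classical in
noncomputable def rootsIn (p : ℝ[X]) (s : Set ℝ) : Finset ℝ :=
  p.roots.toFinset.filter (· ∈ s)

@[simp]
theorem mem_rootsIn {p : ℝ[X]} {s : Set ℝ} {x : ℝ} :
    x ∈ p.rootsIn s ↔ p ≠ 0 ∧ p.IsRoot x ∧ x ∈ s := by
  simp [rootsIn, mem_roots', and_assoc]

theorem rootsIn_subset_roots_toFinset (p : ℝ[X]) (s : Set ℝ) :
    p.rootsIn s ⊆ p.roots.toFinset := fun _ hx =>
  Multiset.mem_toFinset.2 (mem_roots'.2 ((mem_rootsIn.1 hx).imp_right And.left))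

theorem rootsIn_smul {c : ℝ} (hc : c ≠ 0) (p : ℝ[X]) (s : Set ℝ) :
    (c • p).rootsIn s = p.rootsIn s := by
  simp [rootsIn, roots_smul_nonzero p hc]

theorem card_rootsIn_insert {p : ℝ[X]} (hp : p ≠ 0) {s : Set ℝ} {x : ℝ} (hx : p.IsRoot x)
    (hxs : x ∉ s) : #(p.rootsIn (insert x s)) = #(p.rootsIn s) + 1 := by
  have : p.rootsIn (insert x s) = insert x (p.rootsIn s) := by
    ext y
    by_cases hy : y = x
    · simpa [hy, hp] using hx
    · simp [hy]
  rw [this, Finset.card_insert_of_notMem (by simp [hxs])]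

theorem card_rootsIn_Icc_le_card_rootsIn_Ioo_derivative_add_one {p : ℝ[X]}
    (hp : derivative p ≠ 0) (a b : ℝ) :
    #(p.rootsIn (Set.Icc a b)) ≤ #((derivative p).rootsIn (Set.Ioo a b)) + 1 := by
  refine Finset.card_le_of_interleaved fun x hx y hy hxy _ => ?_
  rw [mem_rootsIn] at hx hy
  obtain ⟨z, hz, hz'⟩ := exists_deriv_eq_zero hxy p.continuousOn (hx.2.1.trans hy.2.1.symm)
  refine ⟨z, mem_rootsIn.2 ⟨hp, by rwa [IsRoot, ← p.deriv], ?_⟩, hz⟩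
  exact ⟨hx.2.2.1.trans_lt hz.1, hz.2.trans_le hy.2.2.2⟩

theorem le_card_rootsIn_Ioo_iterate_derivative {p : ℝ[X]} {a b : ℝ} (hab : a < b) {k : ℕ}
    (ha : k ≤ rootMultiplicity a p) (hb : k ≤ rootMultiplicity b p)
    (hk : derivative^[k] p ≠ 0) :
    k ≤ #((derivative^[k] p).rootsIn (Set.Ioo a b)) := by
  induction k with
  | zero => exact Nat.zero_le _
  | succ k ih =>
    rw [Function.iterate_succ_apply'] at hk ⊢
    set q := derivative^[k] p
    have hq : q ≠ 0 := fun h => hk (by rw [h, derivative_zero])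
    have hIcc : #(q.rootsIn (Set.Icc a b)) = #(q.rootsIn (Set.Ioo a b)) + 2 := by
      rw [← Set.Ioc_insert_left hab.le, ← Set.Ioo_insert_right hab,
        card_rootsIn_insert hq (isRoot_iterate_derivative_of_lt_rootMultiplicity ha)
          (by simp [hab.ne]),
        card_rootsIn_insert hq (isRoot_iterate_derivative_of_lt_rootMultiplicity hb) (by simp)]
    have := card_rootsIn_Icc_le_card_rootsIn_Ioo_derivative_add_one hk a b
    have := ih (Nat.le_of_succ_le ha) (Nat.le_of_succ_le hb) hq
    omega

theorem not_isRoot_derivative_of_natDegree_le_card {R : Type*} [CommRing R] [IsDomain R]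
    [DecidableEq R] {p : R[X]} (hp : p ≠ 0) (hdeg : p.natDegree ≤ #p.roots.toFinset) {x : R}
    (hx : p.IsRoot x) : ¬ (derivative p).IsRoot x := by
  intro hx'
  have hnodup : p.roots.Nodup := Multiset.toFinset_card_eq_card_iff_nodup.1
    (le_antisymm (Multiset.toFinset_card_le _) (p.card_roots'.trans hdeg))
  have := Multiset.nodup_iff_count_le_one.1 hnodup x
  rw [count_roots] at this
  exact this.not_gt ((one_lt_rootMultiplicity_iff_isRoot hp).2 ⟨hx, hx'⟩)

theorem iterate_derivative_ne_zero {R : Type*} [CommRing R] [IsDomain R] [CharZero R]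
    {p : R[X]} (hp : p ≠ 0) {k : ℕ} (hk : k ≤ p.natDegree) : derivative^[k] p ≠ 0 := by
  intro h
  have := coeff_iterate_derivative (k := k) p (p.natDegree - k)
  rw [h, coeff_zero, Nat.sub_add_cancel hk, eq_comm, nsmul_eq_mul, mul_eq_zero,
    Nat.cast_eq_zero, Nat.descFactorial_eq_zero_iff_lt] at this
  exact this.elim (fun h => h.not_ge hk) (leadingCoeff_ne_zero.2 hp)

theorem natDegree_X_pow_mul_X_sub_C_pow {R : Type*} [CommRing R] [Nontrivial R] (a : R)
    (m n : ℕ) : (X ^ m * (X - C a) ^ n).natDegree = m + n := by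
  rw [(monic_X_pow m).natDegree_mul ((monic_X_sub_C a).pow n), natDegree_X_pow,
    (monic_X_sub_C a).natDegree_pow, natDegree_X_sub_C, mul_one]

end Polynomial

theorem derivative_X_mul_X_sub_C_one_pow_succ (m : ℕ) :
    derivative ((X * (X - C 1) : ℝ[X]) ^ (m + 1)) =
      ((m : ℝ) + 1) • ((X * (X - C 1)) ^ m + (2 : ℝ) • (X ^ m * (X - C 1) ^ (m + 1))) := by
  rw [derivative_pow_succ, mul_pow, derivative_mul, derivative_X_sub_C, derivative_X,
    smul_eq_C_mul, smul_eq_C_mul]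
  simp only [map_add, map_natCast, map_one, map_ofNat]
  ring

theorem rightRadau_succ (m : ℕ) :
    rightRadau (m + 1) = ((-1 : ℝ) ^ (m + 1) / m.factorial) •
      derivative^[m] (X ^ m * (X - C 1) ^ (m + 1)) := by
  have hfactor : (X ^ 2 - X : ℝ[X]) = X * (X - C 1) := by rw [C_1]; ring
  have hfac : (m + 1).factorial = (m + 1) * m.factorial := Nat.factorial_succ m
  have hm : ((m : ℝ) + 1) ≠ 0 := by positivity
  rw [rightRadau, shLegendre, shLegendre, Nat.add_sub_cancel, hfactor, Function.iterate_succ_apply,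
    derivative_X_mul_X_sub_C_one_pow_succ, iterate_derivative_smul, iterate_map_add,
    iterate_derivative_smul, hfac]
  push_cast
  match_scalars
  · field_simp
    ring
  · field_simp

theorem iterate_derivative_X_pow_mul_X_sub_C_one_pow_ne_zero (m : ℕ) :
    derivative^[m] (X ^ m * (X - C 1) ^ (m + 1) : ℝ[X]) ≠ 0 :=
  iterate_derivative_ne_zero ((monic_X_pow m).mul ((monic_X_sub_C 1).pow (m + 1))).ne_zero
    (by rw [natDegree_X_pow_mul_X_sub_C_pow]; omega)

theorem rightRadau_succ_ne_zero (m : ℕ) : rightRadau (m + 1) ≠ 0 := by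
  rw [rightRadau_succ]
  exact smul_ne_zero (by simp [Nat.factorial_ne_zero])
    (iterate_derivative_X_pow_mul_X_sub_C_one_pow_ne_zero m)

theorem natDegree_rightRadau_succ_le (m : ℕ) : (rightRadau (m + 1)).natDegree ≤ m + 1 := by
  rw [rightRadau_succ]
  refine (natDegree_smul_le _ _).trans ((natDegree_iterate_derivative _ m).trans ?_)
  rw [natDegree_X_pow_mul_X_sub_C_pow]
  omega

theorem succ_le_card_rootsIn_Ioc_rightRadau_succ (m : ℕ) :
    m + 1 ≤ #((rightRadau (m + 1)).rootsIn (Set.Ioc 0 1)) := by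
  set f : ℝ[X] := X ^ m * (X - C 1) ^ (m + 1)
  have hf : f ≠ 0 := ((monic_X_pow m).mul ((monic_X_sub_C 1).pow (m + 1))).ne_zero
  have h0 : m ≤ rootMultiplicity 0 f :=
    (le_rootMultiplicity_iff hf).2 (by rw [map_zero, sub_zero]; exact dvd_mul_right _ _)
  have h1 : m < rootMultiplicity 1 f := (le_rootMultiplicity_iff hf).2 (dvd_mul_left _ _)
  have hne := iterate_derivative_X_pow_mul_X_sub_C_one_pow_ne_zero m
  rw [rightRadau_succ, rootsIn_smul (by simp [Nat.factorial_ne_zero]),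
    ← Set.Ioo_insert_right one_pos,
    card_rootsIn_insert hne (isRoot_iterate_derivative_of_lt_rootMultiplicity h1) (by simp)]
  exact Nat.succ_le_succ (le_card_rootsIn_Ioo_iterate_derivative one_pos h0 h1.le hne)

/-- For `N ≥ 1`, the right Radau polynomial `R_N` has `N` pairwise distinct real roots,
all lying in `(0, 1]`, and it has no multiple roots: no real number is a common root of
`R_N` and its derivative. -/
theorem rightRadau_roots_distinct_in_Ioc (N : ℕ) (hN : 1 ≤ N) :
    (∃ s : Finset ℝ, s.card = N ∧
      ∀ x ∈ s, x ∈ Set.Ioc (0 : ℝ) 1 ∧ (rightRadau N).eval x = 0) ∧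
    ∀ x : ℝ, (rightRadau N).eval x = 0 → (derivative (rightRadau N)).eval x ≠ 0 := by
  obtain ⟨m, rfl⟩ : ∃ m, N = m + 1 := ⟨N - 1, by omega⟩
  have hcard := succ_le_card_rootsIn_Ioc_rightRadau_succ m
  have hdeg : (rightRadau (m + 1)).natDegree ≤ #(rightRadau (m + 1)).roots.toFinset :=
    (natDegree_rightRadau_succ_le m).trans
      (hcard.trans (Finset.card_le_card (rootsIn_subset_roots_toFinset _ _)))
  refine ⟨?_, fun x hx =>
    not_isRoot_derivative_of_natDegree_le_card (rightRadau_succ_ne_zero m) hdeg hx⟩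
  obtain ⟨s, hs, hscard⟩ := Finset.exists_subset_card_eq hcard
  exact ⟨s, hscard, fun x hx => ⟨(mem_rootsIn.1 (hs hx)).2.2, (mem_rootsIn.1 (hs hx)).2.1⟩⟩
end

section
/- Gauss–Radau quadrature exactness: let N ≥ 0 and let τ_0, …, τ_N be an injective enumeration of the N+1 roots of the right Radau polynomial R_{N+1}; let φ_0, …, φ_N be the Lagrange basis polynomials at these nodes and set w_p := ∫₀¹ φ_p(τ) dτ. Then for every real polynomial f of degree at most 2N, ∫₀¹ f(τ) dτ = ∑_{p=0}^{N} w_p · f(τ_p). -/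
open Polynomial

/-!
The quadrature is interpolatory, so it is exact in degree `≤ N`. A polynomial `f` of degree
`≤ 2N` splits as `f = R q + r` with `R = R_{N+1}`, `deg q < N` and `deg r ≤ N`. Since the nodes
are roots of `R`, `f` and `r` agree at the nodes, and `∫₀¹ R q = 0` because both `L_{N+1}` and
`L_N` are orthogonal to polynomials of degree `< N`: by the Rodrigues formula and repeated
integration by parts, the boundary terms vanishing since `(τ² - τ)^n` has roots of order `n`
at `0` and `1`.
-/

section Quadrature

variable {K : Type*} [Field K] {ι : Type*} [Fintype ι] [DecidableEq ι]
  {τ : ι → K} {φ : ι → K[X]}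

theorem eq_sum_eval_smul_of_degree_lt (hτ : Function.Injective τ)
    (hdeg : ∀ i, (φ i).degree < Fintype.card ι)
    (hval : ∀ i k, (φ i).eval (τ k) = if i = k then 1 else 0)
    {r : K[X]} (hr : r.degree < Fintype.card ι) :
    r = ∑ i, r.eval (τ i) • φ i := by
  refine eq_of_degrees_lt_of_eval_index_eq Finset.univ hτ.injOn
    (by rwa [Finset.card_univ]) ?_ fun k _ => ?_
  · rw [Finset.card_univ, ← mem_degreeLT]
    exact Submodule.sum_mem _ fun i _ => Submodule.smul_mem _ _ (mem_degreeLT.2 (hdeg i))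
  · simp [eval_finsetSum, hval]

theorem quadrature_exact_of_degree_lt (I : K[X] →ₗ[K] K) (hτ : Function.Injective τ)
    (hdeg : ∀ i, (φ i).degree < Fintype.card ι)
    (hval : ∀ i k, (φ i).eval (τ k) = if i = k then 1 else 0)
    {r : K[X]} (hr : r.degree < Fintype.card ι) :
    I r = ∑ i, I (φ i) * r.eval (τ i) := by
  conv_lhs => rw [eq_sum_eval_smul_of_degree_lt hτ hdeg hval hr]
  rw [map_sum]
  exact Finset.sum_congr rfl fun i _ => by rw [map_smul, smul_eq_mul, mul_comm]

theorem degree_div_lt_of_natDegree_lt_add {f R : K[X]} {m : ℕ} (hR : R ≠ 0)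
    (hf : f.natDegree < R.natDegree + m) : (f / R).degree < m := by
  rcases eq_or_ne (f / R) 0 with h | h
  · rw [h, degree_zero]
    exact WithBot.bot_lt_coe m
  have hf0 : f ≠ 0 := by
    rintro rfl
    exact h EuclideanDomain.zero_div
  have hadd := degree_add_div hR (not_lt.1 (mt (Polynomial.div_eq_zero_iff hR).2 h))
  rw [degree_eq_natDegree hR, degree_eq_natDegree h, degree_eq_natDegree hf0, ← Nat.cast_add,
    Nat.cast_inj] at hadd
  rw [degree_eq_natDegree h, Nat.cast_lt]
  omega

/-- With `m = card ι` this is Gauss quadrature, with `m = card ι - 1` Gauss–Radau. -/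
theorem quadrature_exact_of_orthogonal (I : K[X] →ₗ[K] K) (hτ : Function.Injective τ)
    (hdeg : ∀ i, (φ i).degree < Fintype.card ι)
    (hval : ∀ i k, (φ i).eval (τ k) = if i = k then 1 else 0)
    {R : K[X]} (hR : R.degree = Fintype.card ι) (hroot : ∀ i, R.eval (τ i) = 0)
    {m : ℕ} (horth : ∀ q : K[X], q.degree < m → I (R * q) = 0)
    {f : K[X]} (hf : f.natDegree < Fintype.card ι + m) :
    I f = ∑ i, I (φ i) * f.eval (τ i) := by
  have hR0 : R ≠ 0 := by
    rintro rfl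
    simp at hR
  have hsplit : R * (f / R) + f % R = f := EuclideanDomain.div_add_mod f R
  have hq : (f / R).degree < m :=
    degree_div_lt_of_natDegree_lt_add hR0 (by rwa [natDegree_eq_of_degree_eq_some hR])
  have hr : (f % R).degree < Fintype.card ι := hR ▸ degree_mod_lt f hR0
  have heval : ∀ i, f.eval (τ i) = (f % R).eval (τ i) := fun i => by
    rw [← hsplit, eval_add, eval_mul, hroot, zero_mul, zero_add, hsplit]
  calc I f = I (R * (f / R)) + I (f % R) := by rw [← map_add, hsplit]
    _ = ∑ i, I (φ i) * (f % R).eval (τ i) := by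
      rw [horth _ hq, zero_add, quadrature_exact_of_degree_lt I hτ hdeg hval hr]
    _ = ∑ i, I (φ i) * f.eval (τ i) := by simp_rw [heval]

end Quadrature

noncomputable def polyIntegral (a b : ℝ) : ℝ[X] →ₗ[ℝ] ℝ where
  toFun p := ∫ t in a..b, p.eval t
  map_add' p q := by
    simp only [eval_add]
    exact intervalIntegral.integral_add (p.continuous.intervalIntegrable a b)
      (q.continuous.intervalIntegrable a b)
  map_smul' c p := by
    simp only [eval_smul, smul_eq_mul, RingHom.id_apply]
    exact intervalIntegral.integral_const_mul c _

section Integration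

variable {a b : ℝ}

theorem polyIntegral_derivative (p : ℝ[X]) :
    polyIntegral a b (derivative p) = p.eval b - p.eval a :=
  intervalIntegral.integral_deriv_eq_sub' (fun x => p.eval x) (funext fun _ => p.deriv)
    (fun _ _ => p.differentiableAt) (derivative p).continuous.continuousOn

theorem polyIntegral_derivative_mul_of_eval_eq_zero {u : ℝ[X]} (ha : u.eval a = 0)
    (hb : u.eval b = 0) (g : ℝ[X]) :
    polyIntegral a b (derivative u * g) = -polyIntegral a b (u * derivative g) := by
  have h := polyIntegral_derivative (a := a) (b := b) (u * g)
  rw [derivative_mul, map_add, eval_mul, eval_mul, ha, hb, zero_mul, zero_mul, sub_zero] at h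
  linarith

theorem polyIntegral_iterate_derivative_mul {u : ℝ[X]} {k : ℕ} (ha : (X - C a) ^ k ∣ u)
    (hb : (X - C b) ^ k ∣ u) (g : ℝ[X]) :
    polyIntegral a b (derivative^[k] u * g) =
      (-1) ^ k * polyIntegral a b (u * derivative^[k] g) := by
  induction k generalizing g with
  | zero => simp
  | succ k ih =>
    have heval {c : ℝ} (hc : (X - C c) ^ (k + 1) ∣ u) : (derivative^[k] u).eval c = 0 := by
      have := pow_sub_dvd_iterate_derivative_of_pow_dvd k hc
      rw [Nat.add_sub_cancel_left, pow_one] at this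
      exact dvd_iff_isRoot.1 this
    have hdvd {c : ℝ} (hc : (X - C c) ^ (k + 1) ∣ u) : (X - C c) ^ k ∣ u :=
      (pow_dvd_pow _ k.le_succ).trans hc
    rw [Function.iterate_succ_apply', polyIntegral_derivative_mul_of_eval_eq_zero (heval ha)
      (heval hb), ih (hdvd ha) (hdvd hb), ← Function.iterate_succ_apply, pow_succ]
    ring

end Integration

theorem X_sq_sub_X_eq_mul {R : Type*} [CommRing R] : (X ^ 2 - X : R[X]) = X * (X - C 1) := by
  rw [C_1]
  ring

theorem monic_X_sq_sub_X_pow (n : ℕ) : ((X ^ 2 - X : ℝ[X]) ^ n).Monic :=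
  X_sq_sub_X_eq_mul (R := ℝ) ▸ (monic_X.mul (monic_X_sub_C 1)).pow n

theorem natDegree_X_sq_sub_X_pow (n : ℕ) : ((X ^ 2 - X : ℝ[X]) ^ n).natDegree = 2 * n := by
  rw [X_sq_sub_X_eq_mul, (monic_X.mul (monic_X_sub_C 1)).natDegree_pow,
    monic_X.natDegree_mul (monic_X_sub_C 1), natDegree_X, natDegree_X_sub_C, mul_comm]

theorem shLegendre_orthogonal (n : ℕ) {g : ℝ[X]} (hg : g.degree < n) :
    polyIntegral 0 1 (shLegendre n * g) = 0 := by
  have hdvd (c : ℝ) (hc : c = 0 ∨ c = 1) : (X - C c) ^ n ∣ (X ^ 2 - X : ℝ[X]) ^ n := by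
    rw [X_sq_sub_X_eq_mul, mul_pow]
    rcases hc with rfl | rfl
    · rw [C_0, sub_zero]
      exact dvd_mul_right _ _
    · exact dvd_mul_left _ _
  rw [shLegendre, smul_mul_assoc, map_smul, polyIntegral_iterate_derivative_mul
    (hdvd 0 (.inl rfl)) (hdvd 1 (.inr rfl)), iterate_derivative_eq_zero_of_degree_lt hg,
    mul_zero, map_zero, mul_zero, smul_zero]

theorem natDegree_shLegendre_le (n : ℕ) : (shLegendre n).natDegree ≤ n := by
  refine (natDegree_smul_le _ _).trans ((natDegree_iterate_derivative _ _).trans ?_)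
  rw [natDegree_X_sq_sub_X_pow]
  omega

theorem coeff_shLegendre_self_ne_zero (n : ℕ) : (shLegendre n).coeff n ≠ 0 := by
  have hlead : ((X ^ 2 - X : ℝ[X]) ^ n).coeff (n + n) = 1 := by
    rw [← two_mul, ← natDegree_X_sq_sub_X_pow]
    exact monic_X_sq_sub_X_pow n
  rw [shLegendre, coeff_smul, coeff_iterate_derivative, hlead, nsmul_eq_mul, mul_one,
    smul_eq_mul]
  have : (n + n).descFactorial n ≠ 0 := by
    rw [Ne, Nat.descFactorial_eq_zero_iff_lt]
    omega
  positivity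

theorem degree_rightRadau_succ (N : ℕ) : (rightRadau (N + 1)).degree = (N + 1 : ℕ) := by
  rw [rightRadau, Nat.add_sub_cancel]
  refine degree_eq_of_le_of_coeff_ne_zero (degree_le_of_natDegree_le ?_) ?_
  · refine (natDegree_smul_le _ _).trans ((natDegree_sub_le _ _).trans ?_)
    exact max_le (natDegree_shLegendre_le _) ((natDegree_shLegendre_le N).trans N.le_succ)
  · rw [coeff_smul, coeff_sub, coeff_eq_zero_of_natDegree_lt
      ((natDegree_shLegendre_le N).trans_lt N.lt_succ_self), sub_zero, smul_eq_mul]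
    exact mul_ne_zero (by positivity) (coeff_shLegendre_self_ne_zero _)

theorem rightRadau_succ_orthogonal (N : ℕ) {q : ℝ[X]} (hq : q.degree < N) :
    polyIntegral 0 1 (rightRadau (N + 1) * q) = 0 := by
  have hq' : q.degree < (N + 1 : ℕ) := hq.trans (by exact_mod_cast N.lt_succ_self)
  rw [rightRadau, Nat.add_sub_cancel, smul_mul_assoc, map_smul, sub_mul, map_sub,
    shLegendre_orthogonal _ hq', shLegendre_orthogonal _ hq, sub_zero, smul_zero]

/-- Gauss–Radau quadrature exactness: if `τ_0, …, τ_N` is an injective enumeration of the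
`N+1` roots of `R_{N+1}`, `φ_p` is the Lagrange basis at these nodes and
`w_p = ∫₀¹ φ_p`, then the quadrature `∑ w_p f(τ_p)` integrates exactly every polynomial
`f` of degree at most `2N`. -/
theorem gaussRadau_quadrature_exact (N : ℕ) (τ : Fin (N + 1) → ℝ)
    (hτ : Function.Injective τ)
    (hroot : ∀ i, (rightRadau (N + 1)).eval (τ i) = 0)
    (φ : Fin (N + 1) → Polynomial ℝ)
    (hdeg : ∀ p, (φ p).degree ≤ (N : WithBot ℕ))
    (hval : ∀ p k, (φ p).eval (τ k) = if p = k then 1 else 0)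
    (f : Polynomial ℝ) (hf : f.degree ≤ ((2 * N : ℕ) : WithBot ℕ)) :
    ∫ t in (0:ℝ)..1, f.eval t =
      ∑ p, (∫ t in (0:ℝ)..1, (φ p).eval t) * f.eval (τ p) := by
  have hdeg' (p : Fin (N + 1)) : (φ p).degree < Fintype.card (Fin (N + 1)) := by
    rw [Fintype.card_fin]
    exact (hdeg p).trans_lt (by exact_mod_cast N.lt_succ_self)
  have hf' : f.natDegree < Fintype.card (Fin (N + 1)) + N := by
    rw [Fintype.card_fin]
    have := natDegree_le_iff_degree_le.2 hf
    omega
  exact quadrature_exact_of_orthogonal (polyIntegral 0 1) hτ hdeg' hval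
    (by rw [Fintype.card_fin]; exact degree_rightRadau_succ N) hroot
    (fun q hq => rightRadau_succ_orthogonal N hq) hf'
end

section
/- Let N ≥ 0, let τ_0, …, τ_N be an injective enumeration of the N+1 roots of the right Radau polynomial R_{N+1}, and let φ_0, …, φ_N be the Lagrange basis at these nodes. Then the basis is L²(0,1)-orthogonal: for all p ≠ q, ∫₀¹ φ_p(τ)·φ_q(τ) dτ = 0; equivalently, the mass matrix M_pq := ∫₀¹ φ_p φ_q dτ is diagonal. -/
/-!
Up to a nonzero factor, `R_{N+1}` is `L_{N+1} - L_N`; it has degree `N + 1`, and by the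
Rodrigues formula and repeated integration by parts (the boundary terms vanish because
`(τ² - τ)^n` has zeros of order `n` at `0` and `1`) it is `L²(0,1)`-orthogonal to every polynomial
of degree `< N`. For `p ≠ q`, `φ_p φ_q` has degree `≤ 2N` and vanishes at the `N + 1` roots of
`R_{N+1}`, so it equals `R_{N+1} s` with `deg s < N`, and its integral vanishes. This is the
exactness of Gauss–Radau quadrature in degree `2N`.
-/

open Polynomial

namespace Polynomial

theorem dvd_of_eval_eq_zero_of_natDegree_le_card {K ι : Type*} [Field K] [Fintype ι]
    {v : ι → K} (hv : Function.Injective v) {R f : K[X]} (hR : R.natDegree ≠ 0)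
    (hcard : R.natDegree ≤ Fintype.card ι) (hRv : ∀ i, R.eval (v i) = 0)
    (hfv : ∀ i, f.eval (v i) = 0) : R ∣ f := by
  rw [← EuclideanDomain.mod_eq_zero]
  refine eq_zero_of_natDegree_lt_card_of_eval_eq_zero _ hv (fun i => ?_)
    ((natDegree_mod_lt f hR).trans_le hcard)
  rw [EuclideanDomain.mod_eq_sub_mul_div, eval_sub, eval_mul, hRv, hfv, zero_mul, sub_zero]

theorem intervalIntegral_eval_derivative_mul (p q : ℝ[X]) (a b : ℝ) :
    ∫ x in a..b, p.derivative.eval x * q.eval x =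
      p.eval b * q.eval b - p.eval a * q.eval a - ∫ x in a..b, p.eval x * q.derivative.eval x := by
  simp only [mul_comm (p.derivative.eval _), mul_comm (p.eval _)]
  exact intervalIntegral.integral_mul_deriv_eq_deriv_mul (fun x _ => q.hasDerivAt x)
    (fun x _ => p.hasDerivAt x) (q.derivative.continuous.intervalIntegrable _ _)
    (p.derivative.continuous.intervalIntegrable _ _)

theorem intervalIntegral_eval_iterate_derivative_mul {a b : ℝ} {n : ℕ} {w : ℝ[X]}
    (ha : (X - C a) ^ n ∣ w) (hb : (X - C b) ^ n ∣ w) (g : ℝ[X]) :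
    ∫ x in a..b, (derivative^[n] w).eval x * g.eval x =
      (-1) ^ n * ∫ x in a..b, w.eval x * (derivative^[n] g).eval x := by
  induction n generalizing w with
  | zero => simp
  | succ n ih =>
    have hw' : ∀ c : ℝ, (X - C c) ^ (n + 1) ∣ w → (X - C c) ^ n ∣ derivative w :=
      fun c h => by simpa using pow_sub_dvd_iterate_derivative_of_pow_dvd 1 h
    have hwa : w.eval a = 0 := dvd_iff_isRoot.mp ((dvd_pow_self _ n.succ_ne_zero).trans ha)
    have hwb : w.eval b = 0 := dvd_iff_isRoot.mp ((dvd_pow_self _ n.succ_ne_zero).trans hb)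
    rw [Function.iterate_succ_apply, ih (hw' a ha) (hw' b hb), intervalIntegral_eval_derivative_mul,
      hwa, hwb, Function.iterate_succ_apply']
    ring

theorem intervalIntegral_eval_eq_zero_of_dvd {R f : ℝ[X]} {a b : ℝ} {m : ℕ}
    (horth : ∀ g : ℝ[X], g.natDegree < m → ∫ x in a..b, R.eval x * g.eval x = 0)
    (hdvd : R ∣ f) (hf : f.natDegree < R.natDegree + m) : ∫ x in a..b, f.eval x = 0 := by
  obtain ⟨g, rfl⟩ := hdvd
  rcases eq_or_ne (R * g) 0 with h | h
  · simp [h]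
  rw [natDegree_mul (left_ne_zero_of_mul h) (right_ne_zero_of_mul h)] at hf
  simpa only [eval_mul] using horth g (by omega)

end Polynomial

theorem shLegendre_eq_map (n : ℕ) :
    shLegendre n = C ((-1) ^ n) * (shiftedLegendre n).map (Int.castRingHom ℝ) := by
  have h := congrArg (map (Int.castRingHom ℝ)) (factorial_mul_shiftedLegendre_eq n)
  simp only [Polynomial.map_mul, Polynomial.map_natCast, ← iterate_derivative_map,
    Polynomial.map_pow, Polynomial.map_sub, map_X, Polynomial.map_one] at h
  have hw : (X ^ 2 - X : ℝ[X]) ^ n = C ((-1) ^ n) * (X ^ n * (1 - X) ^ n) := by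
    rw [← mul_pow, C_pow, C_neg, C_1, ← mul_pow]; ring
  rw [shLegendre, hw, iterate_derivative_C_mul, ← h, smul_eq_C_mul, ← C_eq_natCast,
    ← mul_assoc, ← mul_assoc, ← C_mul, ← C_mul]
  congr 2
  field_simp

theorem natDegree_shLegendre (n : ℕ) : (shLegendre n).natDegree = n := by
  rw [shLegendre_eq_map, natDegree_C_mul (by simp), natDegree_map_eq_of_injective
    (RingHom.injective_int _), natDegree_eq_of_degree_eq_some (degree_shiftedLegendre n)]

theorem natDegree_rightRadau_succ (N : ℕ) : (rightRadau (N + 1)).natDegree = N + 1 := by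
  rw [rightRadau, Nat.add_sub_cancel, natDegree_smul _ (by simp),
    natDegree_sub_eq_left_of_natDegree_lt (by simp [natDegree_shLegendre]), natDegree_shLegendre]

theorem intervalIntegral_shLegendre_mul_eq_zero {n : ℕ} {g : ℝ[X]} (hg : g.natDegree < n) :
    ∫ x in (0 : ℝ)..1, (shLegendre n).eval x * g.eval x = 0 := by
  have hw : (X ^ 2 - X : ℝ[X]) ^ n = (X - C 0) ^ n * (X - C 1) ^ n := by
    rw [← mul_pow, C_0, C_1]; ring
  simp only [shLegendre, eval_smul, smul_eq_mul, mul_assoc, intervalIntegral.integral_const_mul]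
  rw [intervalIntegral_eval_iterate_derivative_mul (hw ▸ dvd_mul_right _ _)
    (hw ▸ dvd_mul_left _ _), iterate_derivative_eq_zero hg]
  simp

theorem intervalIntegral_rightRadau_succ_mul_eq_zero {N : ℕ} {g : ℝ[X]} (hg : g.natDegree < N) :
    ∫ x in (0 : ℝ)..1, (rightRadau (N + 1)).eval x * g.eval x = 0 := by
  have hint (n : ℕ) : IntervalIntegrable (fun x => (shLegendre n).eval x * g.eval x)
      MeasureTheory.volume 0 1 :=
    ((shLegendre n).continuous.mul g.continuous).intervalIntegrable 0 1
  simp only [rightRadau, Nat.add_sub_cancel, eval_smul, eval_sub, smul_eq_mul, mul_assoc, sub_mul,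
    intervalIntegral.integral_const_mul, intervalIntegral.integral_sub (hint _) (hint _),
    intervalIntegral_shLegendre_mul_eq_zero hg, intervalIntegral_shLegendre_mul_eq_zero
    (hg.trans N.lt_succ_self), sub_zero, mul_zero]

/-- The Lagrange basis built at the Gauss–Radau nodes (roots of `R_{N+1}`) is
`L²(0,1)`-orthogonal: the mass matrix `M_pq = ∫₀¹ φ_p φ_q` is diagonal. -/
theorem gaussRadau_lagrangeBasis_orthogonal (N : ℕ) (τ : Fin (N + 1) → ℝ)
    (hτ : Function.Injective τ)
    (hroot : ∀ i, (rightRadau (N + 1)).eval (τ i) = 0)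
    (φ : Fin (N + 1) → Polynomial ℝ)
    (hdeg : ∀ p, (φ p).degree ≤ (N : WithBot ℕ))
    (hval : ∀ p k, (φ p).eval (τ k) = if p = k then 1 else 0) :
    ∀ p q, p ≠ q → ∫ t in (0:ℝ)..1, (φ p).eval t * (φ q).eval t = 0 := by
  intro p q hpq
  have hR := natDegree_rightRadau_succ N
  have hvanish : ∀ k, (φ p * φ q).eval (τ k) = 0 := fun k => by
    rw [eval_mul, hval, hval]
    split_ifs <;> simp_all
  have hdvd : rightRadau (N + 1) ∣ φ p * φ q :=
    dvd_of_eval_eq_zero_of_natDegree_le_card hτ (by omega) (by simp [hR]) hroot hvanish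
  have hprod : (φ p * φ q).natDegree < (rightRadau (N + 1)).natDegree + N :=
    natDegree_mul_le.trans_lt <| by
      have := natDegree_le_of_degree_le (hdeg p); have := natDegree_le_of_degree_le (hdeg q); omega
  simpa only [eval_mul] using intervalIntegral_eval_eq_zero_of_dvd
    (fun g hg => intervalIntegral_rightRadau_succ_mul_eq_zero hg) hdvd hprod
end

section
/- Let τ_0, …, τ_N be any N+1 pairwise distinct real nodes with Lagrange basis φ_0, …, φ_N, and let K_pq := φ_p(1)·φ_q(1) − ∫₀¹ φ_p′(τ)·φ_q(τ) dτ. If the matrix K is invertible, then for every p, ∑_{q=0}^{N} (K⁻¹)_{pq} · φ_q(0) = 1 (property (12) used in the derivation of the local DG predictor system). -/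
open Polynomial Matrix

/-- Property (12) of the local DG predictor derivation: for any pairwise distinct nodes
with Lagrange basis `φ` and `K_pq = φ_p(1) φ_q(1) − ∫₀¹ φ_p′ φ_q`, if `K` is invertible
then `∑_q (K⁻¹)_pq φ_q(0) = 1` for every `p`. -/
theorem Kinv_mulVec_eval_zero_eq_one (N : ℕ) (τ : Fin (N + 1) → ℝ)
    (hτ : Function.Injective τ)
    (φ : Fin (N + 1) → Polynomial ℝ)
    (hdeg : ∀ p, (φ p).degree ≤ (N : WithBot ℕ))
    (hval : ∀ p k, (φ p).eval (τ k) = if p = k then 1 else 0)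
    (K : Matrix (Fin (N + 1)) (Fin (N + 1)) ℝ)
    (hK : ∀ p q, K p q = (φ p).eval 1 * (φ q).eval 1 -
      ∫ t in (0:ℝ)..1, (derivative (φ p)).eval t * (φ q).eval t)
    (hKinv : IsUnit K.det) :
    ∀ p, ∑ q, K⁻¹ p q * (φ q).eval 0 = 1 := by
  -- the sum of the Lagrange basis polynomials is 1
  have hsum : (∑ q, φ q) = 1 := by
    have hz : (∑ q, φ q) - 1 = 0 := by
      apply Polynomial.eq_zero_of_natDegree_lt_card_of_eval_eq_zero _ hτ
      · intro k
        simp [Polynomial.eval_finset_sum, hval, Finset.sum_ite_eq]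
      · have hd : ((∑ q, φ q) - 1 : Polynomial ℝ).degree ≤ (N : WithBot ℕ) := by
          refine le_trans (Polynomial.degree_sub_le _ _) ?_
          refine max_le (le_trans (Polynomial.degree_sum_le _ _) ?_) ?_
          · exact Finset.sup_le fun q _ => hdeg q
          · exact le_trans Polynomial.degree_one_le (by exact_mod_cast Nat.zero_le N)
        have := Polynomial.natDegree_le_iff_degree_le.mpr hd
        simpa [Fintype.card_fin] using lt_of_le_of_lt this (Nat.lt_succ_self N)
    exact sub_eq_zero.mp hz
  -- fundamental theorem of calculus for polynomials
  have hftc : ∀ p : Fin (N + 1),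
      (∫ t in (0:ℝ)..1, (derivative (φ p)).eval t) = (φ p).eval 1 - (φ p).eval 0 := by
    intro p
    apply intervalIntegral.integral_deriv_eq_sub' (fun x => (φ p).eval x)
    · funext x; exact Polynomial.deriv (p := φ p)
    · intro x _; exact (φ p).differentiableAt
    · exact (derivative (φ p)).continuousOn
  -- row sums of K equal φ_p(0)
  have hrow : ∀ p, (∑ q, K p q) = (φ p).eval 0 := by
    intro p
    have : (∑ q, K p q) = (φ p).eval 1 * ((∑ q, φ q).eval 1) -
        ∫ t in (0:ℝ)..1, (derivative (φ p)).eval t * ((∑ q, φ q).eval t) := by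
      rw [Polynomial.eval_finset_sum]
      simp only [hK, Finset.sum_sub_distrib, ← Finset.mul_sum]
      congr 1
      rw [← intervalIntegral.integral_finset_sum]
      · congr 1; ext t; rw [Polynomial.eval_finset_sum, Finset.mul_sum]
      · intro q _
        exact (((derivative (φ p)).continuous.mul (φ q).continuous).intervalIntegrable _ _)
    rw [this, hsum]
    simp [hftc p]
  intro p
  have h1 : K.mulVec (fun _ => (1:ℝ)) = fun p => (φ p).eval 0 := by
    ext p
    simp [Matrix.mulVec, dotProduct, hrow p]
  have h2 : K⁻¹.mulVec (fun p => (φ p).eval 0) = fun _ => (1:ℝ) := by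
    rw [← h1, Matrix.mulVec_mulVec, Matrix.nonsing_inv_mul K hKinv, Matrix.one_mulVec]
  have := congrFun h2 p
  simpa [Matrix.mulVec, dotProduct] using this
end

section
/- Stiffly-accurate property of the ADER-DG matrix A = K⁻¹·M: let τ_0, …, τ_N be pairwise distinct real nodes such that τ_{p*} = 1 for some index p*, let φ_0, …, φ_N be the Lagrange basis, K_pq := φ_p(1)φ_q(1) − ∫₀¹ φ_p′ φ_q dτ, M_pq := ∫₀¹ φ_p φ_q dτ, and w_q := ∫₀¹ φ_q dτ. If K is invertible and A := K⁻¹M, then A_{p*,q} = w_q for every q; consequently the matrix A − 𝟙⊗w, whose (p,q)-entry is A_pq − w_q, is singular: det(A − 𝟙⊗w) = 0. -/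
/-!
The Lagrange basis is a partition of unity, `∑ p, φ p = 1`. Hence in each column sum of `K` the
derivative terms cancel and `∑ p, K p q = φ q (1)`, which is `δ_{q p*}` since `τ p* = 1`. So
`𝟙ᵀ K = e_{p*}ᵀ`, i.e. the `p*`-th row of `K⁻¹` is `𝟙ᵀ`, and the `p*`-th row of `K⁻¹ M` is
`𝟙ᵀ M`, whose `q`-th entry is `∫₀¹ (∑ r, φ r) φ q = w q`. Thus the `p*`-th row of `A − 𝟙⊗w`
vanishes.
-/

open Polynomial Matrix

theorem Polynomial.sum_eq_one_of_eval_eq_ite {R ι : Type*} [CommRing R] [IsDomain R]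
    [Fintype ι] [DecidableEq ι] [Nonempty ι] {τ : ι → R} (hτ : Function.Injective τ)
    {φ : ι → R[X]} (hdeg : ∀ p, (φ p).degree < Fintype.card ι)
    (hval : ∀ p k, (φ p).eval (τ k) = if p = k then 1 else 0) :
    ∑ p, φ p = 1 := by
  refine eq_of_degrees_lt_of_eval_index_eq Finset.univ hτ.injOn
    ((degree_sum_le _ _).trans_lt ((Finset.sup_lt_iff (WithBot.bot_lt_coe _)).2 fun p _ => hdeg p))
    (degree_one_le.trans_lt (by exact_mod_cast Fintype.card_pos)) fun k _ => ?_
  simp [eval_finsetSum, hval]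

theorem Matrix.inv_mul_apply_of_vecMul_eq_single {n m R : Type*} [Fintype n] [DecidableEq n]
    [CommRing R] {K : Matrix n n R} (hK : IsUnit K.det) {v : n → R} {i : n}
    (hv : v ᵥ* K = Pi.single i 1) (M : Matrix n m R) : (K⁻¹ * M) i = v ᵥ* M := by
  calc (K⁻¹ * M) i = Pi.single i 1 ᵥ* (K⁻¹ * M) := by rw [single_vecMul, one_smul]; rfl
    _ = v ᵥ* M := by rw [← hv, ← vecMul_vecMul, vecMul_vecMul v, mul_nonsing_inv K hK, vecMul_one]

noncomputable def dgStiffnessMatrix {ι : Type*} (φ : ι → ℝ[X]) : Matrix ι ι ℝ :=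
  of fun p q => (φ p).eval 1 * (φ q).eval 1 -
    ∫ t in (0:ℝ)..1, (derivative (φ p)).eval t * (φ q).eval t

noncomputable def dgMassMatrix {ι : Type*} (φ : ι → ℝ[X]) : Matrix ι ι ℝ :=
  of fun p q => ∫ t in (0:ℝ)..1, (φ p).eval t * (φ q).eval t

section PartitionOfUnity

variable {ι : Type*} [Fintype ι] {φ : ι → ℝ[X]}

theorem one_vecMul_dgStiffnessMatrix (hφ : ∑ p, φ p = 1) :
    1 ᵥ* dgStiffnessMatrix φ = fun q => (φ q).eval 1 := by
  funext q
  have hφ' : ∀ t, ∑ p, (derivative (φ p)).eval t = 0 := fun t => by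
    rw [← eval_finsetSum, ← map_sum, hφ, derivative_one, eval_zero]
  have hint : ∀ p ∈ Finset.univ, IntervalIntegrable
      (fun t => (derivative (φ p)).eval t * (φ q).eval t) MeasureTheory.volume 0 1 :=
    fun p _ => ((derivative (φ p)).continuous.mul (φ q).continuous).intervalIntegrable _ _
  simp only [vecMul, dotProduct, Pi.one_apply, one_mul, dgStiffnessMatrix, of_apply,
    Finset.sum_sub_distrib, ← Finset.sum_mul, ← eval_finsetSum, hφ, eval_one,
    ← intervalIntegral.integral_finsetSum hint, hφ', zero_mul, intervalIntegral.integral_zero,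
    sub_zero]

theorem one_vecMul_dgMassMatrix (hφ : ∑ p, φ p = 1) :
    1 ᵥ* dgMassMatrix φ = fun q => ∫ t in (0:ℝ)..1, (φ q).eval t := by
  funext q
  have hint : ∀ p ∈ Finset.univ, IntervalIntegrable
      (fun t => (φ p).eval t * (φ q).eval t) MeasureTheory.volume 0 1 :=
    fun p _ => ((φ p).continuous.mul (φ q).continuous).intervalIntegrable _ _
  simp only [vecMul, dotProduct, Pi.one_apply, one_mul, dgMassMatrix, of_apply,
    ← intervalIntegral.integral_finsetSum hint, ← Finset.sum_mul, ← eval_finsetSum, hφ, eval_one]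

end PartitionOfUnity

/-- Stiffly-accurate property of the ADER-DG matrix `A = K⁻¹ M`: if one of the nodes is
`τ_{p*} = 1`, then the `p*`-th row of `A` equals the weight vector `w`, and consequently
the matrix `A − 𝟙⊗w` is singular. -/
theorem aderDG_stifflyAccurate (N : ℕ) (τ : Fin (N + 1) → ℝ)
    (hτ : Function.Injective τ)
    (pstar : Fin (N + 1)) (hpstar : τ pstar = 1)
    (φ : Fin (N + 1) → Polynomial ℝ)
    (hdeg : ∀ p, (φ p).degree ≤ (N : WithBot ℕ))
    (hval : ∀ p k, (φ p).eval (τ k) = if p = k then 1 else 0)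
    (K M : Matrix (Fin (N + 1)) (Fin (N + 1)) ℝ)
    (hK : ∀ p q, K p q = (φ p).eval 1 * (φ q).eval 1 -
      ∫ t in (0:ℝ)..1, (derivative (φ p)).eval t * (φ q).eval t)
    (hM : ∀ p q, M p q = ∫ t in (0:ℝ)..1, (φ p).eval t * (φ q).eval t)
    (w : Fin (N + 1) → ℝ)
    (hw : ∀ q, w q = ∫ t in (0:ℝ)..1, (φ q).eval t)
    (hKinv : IsUnit K.det) :
    (∀ q, (K⁻¹ * M) pstar q = w q) ∧
    (Matrix.of fun p q => (K⁻¹ * M) p q - w q).det = 0 := by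
  have hsum : ∑ p, φ p = 1 := sum_eq_one_of_eval_eq_ite hτ
    (fun p => (hdeg p).trans_lt (by rw [Fintype.card_fin]; exact_mod_cast N.lt_succ_self)) hval
  have hK' : K = dgStiffnessMatrix φ := Matrix.ext hK
  have hM' : M = dgMassMatrix φ := Matrix.ext hM
  have hcolsum : 1 ᵥ* K = Pi.single pstar 1 := by
    rw [hK', one_vecMul_dgStiffnessMatrix hsum]
    funext q
    simpa [Pi.single_apply, hpstar] using hval q pstar
  have hrow : ∀ q, (K⁻¹ * M) pstar q = w q := fun q => by
    rw [inv_mul_apply_of_vecMul_eq_single hKinv hcolsum, hM', one_vecMul_dgMassMatrix hsum, hw]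
  exact ⟨hrow, det_eq_zero_of_row_eq_zero pstar fun q => by simp [hrow q]⟩
end

section
/- L-stability asymptotics: let n ≥ 1, let A be an invertible real n×n matrix and w ∈ ℝⁿ such that the matrix A − 𝟙⊗w (entries A_pq − w_q) is singular. Then the polynomial z ↦ det(Iₙ − z·A + z·(𝟙⊗w)) has degree at most n − 1, while the polynomial z ↦ det(Iₙ − z·A) has degree exactly n; consequently the stability function R(z) := det(Iₙ − z·A + z·(𝟙⊗w))/det(Iₙ − z·A) (viewed for complex z outside the finitely many zeros of the denominator) tends to 0 as |z| → ∞. -/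
/-!
`z ↦ det (1 - z • M)` is the reversed characteristic polynomial of `M`: its degree is at most
the size `n` of `M` and its coefficient of `z ^ n` is `(-1) ^ n * det M`. The numerator of `R` is
this polynomial for the singular matrix `A - 𝟙⊗w` and the denominator is the one for the
invertible `A`, so the numerator has strictly smaller degree and the quotient tends to `0`.
-/

open Matrix Filter Polynomial

namespace Matrix

variable {ι R : Type*} [Fintype ι] [DecidableEq ι] [CommRing R]

theorem eval_charpolyRev_eq_det (M : Matrix ι ι R) (z : R) :
    M.charpolyRev.eval z = (1 - z • M).det := by
  rw [charpolyRev, ← coe_evalRingHom, RingHom.map_det]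
  congr 1
  ext i j
  simp [one_apply, apply_ite (eval z), mul_comm z]

theorem natDegree_charpolyRev_le (M : Matrix ι ι R) :
    M.charpolyRev.natDegree ≤ Fintype.card ι := by
  nontriviality R
  rw [← reverse_charpoly, ← charpoly_natDegree_eq_dim M]
  exact reverse_natDegree_le _

theorem coeff_charpolyRev_card (M : Matrix ι ι R) :
    M.charpolyRev.coeff (Fintype.card ι) = (-1) ^ Fintype.card ι * M.det := by
  nontriviality R
  rw [← reverse_charpoly, coeff_reverse, charpoly_natDegree_eq_dim, revAt_le le_rfl,
    Nat.sub_self, det_eq_sign_charpoly_coeff, ← mul_assoc, ← mul_pow]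
  simp

theorem degree_charpolyRev_lt_of_det_eq_zero {M : Matrix ι ι R} (h : M.det = 0) :
    M.charpolyRev.degree < Fintype.card ι := by
  refine (degree_lt_iff_coeff_zero _ _).mpr fun m hm ↦ ?_
  rcases hm.eq_or_lt with rfl | hlt
  · rw [coeff_charpolyRev_card, h, mul_zero]
  · exact coeff_eq_zero_of_natDegree_lt ((natDegree_charpolyRev_le M).trans_lt hlt)

theorem degree_charpolyRev_of_isUnit_det [Nontrivial R] {M : Matrix ι ι R} (h : IsUnit M.det) :
    M.charpolyRev.degree = Fintype.card ι := by
  refine degree_eq_of_le_of_coeff_ne_zero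
    (degree_le_of_natDegree_le (natDegree_charpolyRev_le M)) ?_
  rw [coeff_charpolyRev_card]
  exact ((isUnit_neg_one.pow _).mul h).ne_zero

theorem det_one_sub_smul_add_smul_eq_eval_charpolyRev (A : Matrix ι ι R) (w : ι → R) (z : R) :
    (1 - z • A + z • of fun _ j ↦ w j).det = (of fun i j ↦ A i j - w j).charpolyRev.eval z := by
  rw [eval_charpolyRev_eq_det]
  congr 1
  ext i j
  simp only [sub_apply, add_apply, smul_apply, of_apply, smul_eq_mul]
  ring

end Matrix

namespace Polynomial

theorem degree_le_sub_one_of_degree_lt {R : Type*} [Semiring R] {p : R[X]} {n : ℕ}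
    (h : p.degree < n) : p.degree ≤ ↑(n - 1) :=
  (degree_le_iff_coeff_zero _ _).mpr fun m hm ↦ (degree_lt_iff_coeff_zero _ _).mp h m <| by
    have : n - 1 < m := by exact_mod_cast hm
    omega

theorem tendsto_eval_div_eval_cocompact {𝕜 : Type*} [NormedField 𝕜] [ProperSpace 𝕜]
    {P Q : 𝕜[X]} (h : P.degree < Q.degree) :
    Tendsto (fun z ↦ P.eval z / Q.eval z) (cocompact 𝕜) (nhds 0) := by
  rw [← Metric.cobounded_eq_cocompact]
  exact (isLittleO_cobounded_of_degree_lt h).tendsto_div_nhds_zero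

end Polynomial

theorem Lstability_asymptotics_general (n : ℕ)
    (A : Matrix (Fin n) (Fin n) ℝ) (w : Fin n → ℝ)
    (hA : IsUnit A.det)
    (hsing : (Matrix.of fun p q => A p q - w q).det = 0) :
    (∃ P : Polynomial ℝ,
      (∀ z : ℝ, P.eval z =
        ((1 : Matrix (Fin n) (Fin n) ℝ) - z • A + z • Matrix.of fun _ q => w q).det) ∧
      P.degree ≤ ((n - 1 : ℕ) : WithBot ℕ)) ∧
    (∃ Q : Polynomial ℝ,
      (∀ z : ℝ, Q.eval z = ((1 : Matrix (Fin n) (Fin n) ℝ) - z • A).det) ∧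
      Q.degree = (n : WithBot ℕ)) ∧
    Tendsto
      (fun z : ℂ =>
        ((1 : Matrix (Fin n) (Fin n) ℂ) - z • A.map (Complex.ofReal)
            + z • Matrix.of fun _ q => ((w q : ℝ) : ℂ)).det /
          ((1 : Matrix (Fin n) (Fin n) ℂ) - z • A.map (Complex.ofReal)).det)
      (cocompact ℂ) (nhds 0) := by
  have hsingℂ : (of fun p q => A.map Complex.ofReal p q - (w q : ℂ)).det = 0 := by
    have : (of fun p q => A.map Complex.ofReal p q - (w q : ℂ)) =
        Complex.ofRealHom.mapMatrix (of fun p q => A p q - w q) := by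
      ext p q; simp
    rw [this, ← RingHom.map_det, hsing, map_zero]
  have hAℂ : IsUnit (A.map Complex.ofReal).det :=
    RingHom.map_det Complex.ofRealHom A ▸ hA.map Complex.ofRealHom
  refine ⟨⟨_, fun z ↦ (det_one_sub_smul_add_smul_eq_eval_charpolyRev A w z).symm,
      degree_le_sub_one_of_degree_lt (by simpa using degree_charpolyRev_lt_of_det_eq_zero hsing)⟩,
    ⟨A.charpolyRev, eval_charpolyRev_eq_det A, by simpa using degree_charpolyRev_of_isUnit_det hA⟩,
    ?_⟩
  have hdeg := (degree_charpolyRev_lt_of_det_eq_zero hsingℂ).trans_eq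
    (degree_charpolyRev_of_isUnit_det hAℂ).symm
  refine (tendsto_eval_div_eval_cocompact hdeg).congr fun z ↦ ?_
  rw [det_one_sub_smul_add_smul_eq_eval_charpolyRev, ← eval_charpolyRev_eq_det]

/-- L-stability asymptotics: if `A` is an invertible real `n × n` matrix and the matrix
`A − 𝟙⊗w` is singular, then `z ↦ det (I − z A + z 𝟙⊗w)` is a polynomial of degree at
most `n − 1`, `z ↦ det (I − z A)` is a polynomial of degree exactly `n`, and the
stability function `R(z)` tends to `0` as `|z| → ∞` in `ℂ`. -/
theorem Lstability_asymptotics (n : ℕ) (hn : 1 ≤ n)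
    (A : Matrix (Fin n) (Fin n) ℝ) (w : Fin n → ℝ)
    (hA : IsUnit A.det)
    (hsing : (Matrix.of fun p q => A p q - w q).det = 0) :
    (∃ P : Polynomial ℝ,
      (∀ z : ℝ, P.eval z =
        ((1 : Matrix (Fin n) (Fin n) ℝ) - z • A + z • Matrix.of fun _ q => w q).det) ∧
      P.degree ≤ ((n - 1 : ℕ) : WithBot ℕ)) ∧
    (∃ Q : Polynomial ℝ,
      (∀ z : ℝ, Q.eval z = ((1 : Matrix (Fin n) (Fin n) ℝ) - z • A).det) ∧
      Q.degree = (n : WithBot ℕ)) ∧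
    Tendsto
      (fun z : ℂ =>
        ((1 : Matrix (Fin n) (Fin n) ℂ) - z • A.map (Complex.ofReal)
            + z • Matrix.of fun _ q => ((w q : ℝ) : ℂ)).det /
          ((1 : Matrix (Fin n) (Fin n) ℂ) - z • A.map (Complex.ofReal)).det)
      (cocompact ℂ) (nhds 0) :=
  Lstability_asymptotics_general n A w hA hsing
end

section
/- A-stability of the N = 1 ADER-DG scheme: for every z ∈ ℂ with Re z ≤ 0, one has 1 − (2/3)z + (1/6)z² ≠ 0 and |1 + z/3| ≤ |1 − (2/3)z + (1/6)z²|; that is, the stability function R(z) = (1 + z/3)/(1 − (2/3)z + (1/6)z²) satisfies |R(z)| ≤ 1 on the closed left half-plane. -/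
/-!
With `z = x + iy`, the difference `36 (|Q z|² - |P z|²)` of the squared moduli of the denominator
`Q z = 1 - (2/3) z + (1/6) z²` and the numerator `P z = 1 + z/3` is the polynomial
`x (x - 6) ((x - 1)² + 11) + y⁴ + 2 x (x - 4) y²`, each of whose terms is nonnegative for `x ≤ 0`.
Hence `|P| ≤ |Q|` there, and a zero of `Q` in the left half-plane would also be a zero of `P`,
i.e. `z = -3`, where `Q` equals `9/2`.
-/

open Complex

theorem normSq_aderDG_N1_den_sub_normSq_num (z : ℂ) :
    normSq (1 - (2 / 3) * z + (1 / 6) * z ^ 2) - normSq (1 + z / 3) =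
      (z.re * (z.re - 6) * ((z.re - 1) ^ 2 + 11) + z.im ^ 4
        + 2 * (z.re * (z.re - 4)) * z.im ^ 2) / 36 := by
  simp only [normSq_apply, add_re, add_im, sub_re, sub_im, mul_re, mul_im, div_re, div_im,
    pow_two, one_re, one_im]
  norm_num
  ring

theorem normSq_aderDG_N1_num_le_normSq_den {z : ℂ} (hz : z.re ≤ 0) :
    normSq (1 + z / 3) ≤ normSq (1 - (2 / 3) * z + (1 / 6) * z ^ 2) := by
  have h6 : 0 ≤ z.re * (z.re - 6) := mul_nonneg_of_nonpos_of_nonpos hz (by linarith)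
  have h4 : 0 ≤ z.re * (z.re - 4) := mul_nonneg_of_nonpos_of_nonpos hz (by linarith)
  have hgap := normSq_aderDG_N1_den_sub_normSq_num z
  have : 0 ≤ z.re * (z.re - 6) * ((z.re - 1) ^ 2 + 11) + z.im ^ 4
      + 2 * (z.re * (z.re - 4)) * z.im ^ 2 := by positivity
  linarith

/-- A-stability of the `N = 1` ADER-DG scheme: for every complex `z` with `Re z ≤ 0`,
the denominator `1 − (2/3)z + (1/6)z²` is nonzero and
`|1 + z/3| ≤ |1 − (2/3)z + (1/6)z²|`, i.e. the stability function satisfies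
`|R(z)| ≤ 1` on the closed left half-plane. -/
theorem aderDG_N1_Astable (z : ℂ) (hz : z.re ≤ 0) :
    1 - (2 / 3) * z + (1 / 6) * z ^ 2 ≠ 0 ∧
    ‖1 + z / 3‖ ≤ ‖1 - (2 / 3) * z + (1 / 6) * z ^ 2‖ := by
  have hle : ‖1 + z / 3‖ ≤ ‖1 - (2 / 3) * z + (1 / 6) * z ^ 2‖ := by
    rw [← sq_le_sq₀ (norm_nonneg _) (norm_nonneg _), ← normSq_eq_norm_sq, ← normSq_eq_norm_sq]
    exact normSq_aderDG_N1_num_le_normSq_den hz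
  refine ⟨fun hden => ?_, hle⟩
  have hnum : 1 + z / 3 = 0 := by rwa [hden, norm_zero, norm_le_zero_iff] at hle
  have hz3 : z = -3 := by linear_combination 3 * hnum
  norm_num [hz3] at hden
end
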